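/- arXiv:1311.0494 — 9 statements merged into one kernel-verified Lean document; each statement's English description precedes it below -/
import Mathlib

section
/- Let k be a positive integer and let A be the adjacency matrix of a regular tournament of order 2k+1 with valency k. Then the block matrix B = [[A, Aᵀ], [A, Aᵀ]] (i.e., Matrix.fromBlocks A Aᵀ A Aᵀ) is the adjacency matrix of a directed strongly regular graph with parameters (4k+2, 2k, k, k−1, k); that is, B·B = k·I + (k−1)·B + k·(J − I − B) and B·J = J·B = 2k·J. -/
/-!
The two block rows of `B = [[A, Aᵀ], [A, Aᵀ]]` coincide, so the blocks of `B²` are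
`(A + Aᵀ) A` and `(A + Aᵀ) Aᵀ`. Since `A + Aᵀ = J - I` and `J A = J Aᵀ = k J`, these are
`k J - A` and `k J - Aᵀ`, i.e. `B² = k J - B`, which is the DSRG identity with
`t = μ = k` and `λ = k - 1`.
-/

open Matrix Kronecker

/-- The all-ones square matrix over `ℤ` indexed by `α`. -/
def allOnes (α : Type*) : Matrix α α ℤ := Matrix.of fun _ _ => 1

/-- `B` is the adjacency matrix of a directed strongly regular graph
with parameters `(n, k, t, l, m)`. -/
def IsAdjDSRG {α : Type*} [Fintype α] [DecidableEq α]
    (B : Matrix α α ℤ) (n k t l m : ℤ) : Prop :=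
  (Fintype.card α : ℤ) = n ∧
  (∀ i j, B i j = 0 ∨ B i j = 1) ∧
  (∀ i, B i i = 0) ∧
  B * B = t • (1 : Matrix α α ℤ) + l • B + m • (allOnes α - 1 - B) ∧
  B * allOnes α = k • allOnes α ∧
  allOnes α * B = k • allOnes α

/-- `A` is the adjacency matrix of a regular tournament of order `n` with valency `k`. -/
def IsRegularTournament {n : ℕ} (k : ℕ) (A : Matrix (Fin n) (Fin n) ℤ) : Prop :=
  (∀ i j, A i j = 0 ∨ A i j = 1) ∧
  (∀ i, A i i = 0) ∧
  A + Aᵀ = allOnes (Fin n) - 1 ∧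
  A * allOnes (Fin n) = (k : ℤ) • allOnes (Fin n) ∧
  allOnes (Fin n) * A = (k : ℤ) • allOnes (Fin n)

/-- The block matrix `M(X) = [[X, Xᵀ + I], [X + I, Xᵀ]]`. -/
def MBlock {α : Type*} [DecidableEq α] (X : Matrix α α ℤ) :
    Matrix (α ⊕ α) (α ⊕ α) ℤ :=
  Matrix.fromBlocks X (Xᵀ + 1) (X + 1) Xᵀ

@[simp]
theorem allOnes_transpose (α : Type*) : (allOnes α)ᵀ = allOnes α := rfl

theorem allOnes_sum (α : Type*) :
    allOnes (α ⊕ α) = fromBlocks (allOnes α) (allOnes α) (allOnes α) (allOnes α) := by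
  ext (i | i) (j | j) <;> rfl

section Blocks

variable {α : Type*} [Fintype α] {A : Matrix α α ℤ} {c : ℤ}

theorem transpose_mul_allOnes (h : allOnes α * A = c • allOnes α) :
    Aᵀ * allOnes α = c • allOnes α := by
  simpa using congrArg transpose h

theorem allOnes_mul_transpose (h : A * allOnes α = c • allOnes α) :
    allOnes α * Aᵀ = c • allOnes α := by
  simpa using congrArg transpose h

theorem mul_add_transpose_mul_of_add_transpose [DecidableEq α]
    (hsum : A + Aᵀ = allOnes α - 1) {X : Matrix α α ℤ} (hX : allOnes α * X = c • allOnes α) :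
    A * X + Aᵀ * X = c • allOnes α - X := by
  rw [← add_mul, hsum, sub_mul, hX, one_mul]

theorem fromBlocks_mul_self_of_add_transpose [DecidableEq α]
    (hsum : A + Aᵀ = allOnes α - 1) (hAJ : A * allOnes α = c • allOnes α)
    (hJA : allOnes α * A = c • allOnes α) :
    fromBlocks A Aᵀ A Aᵀ * fromBlocks A Aᵀ A Aᵀ =
      c • allOnes (α ⊕ α) - fromBlocks A Aᵀ A Aᵀ := by
  rw [fromBlocks_multiply, mul_add_transpose_mul_of_add_transpose hsum hJA,
    mul_add_transpose_mul_of_add_transpose hsum (allOnes_mul_transpose hAJ), allOnes_sum,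
    fromBlocks_smul]
  simp only [sub_eq_add_neg, fromBlocks_neg, fromBlocks_add]

theorem fromBlocks_mul_allOnes (hAJ : A * allOnes α = c • allOnes α)
    (hJA : allOnes α * A = c • allOnes α) :
    fromBlocks A Aᵀ A Aᵀ * allOnes (α ⊕ α) = (2 * c) • allOnes (α ⊕ α) := by
  rw [allOnes_sum, fromBlocks_multiply, fromBlocks_smul, hAJ, transpose_mul_allOnes hJA,
    ← add_smul, two_mul]

theorem allOnes_mul_fromBlocks (hAJ : A * allOnes α = c • allOnes α)
    (hJA : allOnes α * A = c • allOnes α) :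
    allOnes (α ⊕ α) * fromBlocks A Aᵀ A Aᵀ = (2 * c) • allOnes (α ⊕ α) := by
  rw [allOnes_sum, fromBlocks_multiply, fromBlocks_smul, hJA, allOnes_mul_transpose hAJ,
    ← add_smul, two_mul]

end Blocks

theorem stmt0_general (k : ℕ)
    (A : Matrix (Fin (2 * k + 1)) (Fin (2 * k + 1)) ℤ)
    (hA : IsRegularTournament k A) :
    IsAdjDSRG (Matrix.fromBlocks A Aᵀ A Aᵀ)
      (4 * (k : ℤ) + 2) (2 * (k : ℤ)) (k : ℤ) ((k : ℤ) - 1) (k : ℤ) := by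
  obtain ⟨h01, hdiag, hsum, hAJ, hJA⟩ := hA
  refine ⟨?_, ?_, ?_, ?_, fromBlocks_mul_allOnes hAJ hJA, allOnes_mul_fromBlocks hAJ hJA⟩
  · simp only [Fintype.card_sum, Fintype.card_fin]
    push_cast
    ring
  · rintro (i | i) (j | j) <;> exact h01 _ _
  · rintro (i | i) <;> exact hdiag i
  · rw [fromBlocks_mul_self_of_add_transpose hsum hAJ hJA]
    module

/-- Lemma 2(1): the block matrix `[[A, Aᵀ], [A, Aᵀ]]` built from a regular
tournament of order `2k+1` is the adjacency matrix of a
DSRG `(4k+2, 2k, k, k-1, k)`. -/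
theorem stmt0 (k : ℕ) (hk : 0 < k)
    (A : Matrix (Fin (2 * k + 1)) (Fin (2 * k + 1)) ℤ)
    (hA : IsRegularTournament k A) :
    IsAdjDSRG (Matrix.fromBlocks A Aᵀ A Aᵀ)
      (4 * (k : ℤ) + 2) (2 * (k : ℤ)) (k : ℤ) ((k : ℤ) - 1) (k : ℤ) :=
  stmt0_general k A hA
end

section
/- Let k be a positive integer and let A be the adjacency matrix of a regular tournament of order 2k+1 with valency k. Then M(A) = [[A, Aᵀ + I], [A + I, Aᵀ]] is the adjacency matrix of a directed strongly regular graph with parameters (4k+2, 2k+1, k+1, k, k+1); that is, M(A)·M(A) = (k+1)·I + k·M(A) + (k+1)·(J − I − M(A)) and M(A)·J = J·M(A) = (2k+1)·J. -/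
open Matrix Kronecker

/-! Each block of `M(A)²` is `(A + Aᵀ) * A` or `(A + Aᵀ) * Aᵀ` plus `A + Aᵀ` and possibly `I`.
Substituting `A + Aᵀ = J - I` and `J * A = J * Aᵀ = k • J` turns it into `(k + 1) • J` minus the
corresponding block of `M(A)`, so `M(A)² = (k + 1) • J - M(A)`: this is the DSRG equation with
`(t, λ, μ) = (k + 1, k, k + 1)`. Every row and column of `M(A)` meets `A`, `Aᵀ` and one `I`,
hence sums to `2k + 1`. -/

section

variable {α : Type*}

lemma allOnes_sum_eq_fromBlocks :
    allOnes (α ⊕ α) = fromBlocks (allOnes α) (allOnes α) (allOnes α) (allOnes α) := by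
  ext (i | i) (j | j) <;> rfl

lemma transpose_allOnes : (allOnes α)ᵀ = allOnes α := rfl

lemma transpose_mul_allOnes_s2 [Fintype α] {A : Matrix α α ℤ} {k : ℤ}
    (hJA : allOnes α * A = k • allOnes α) :
    Aᵀ * allOnes α = k • allOnes α := by
  rw [← transpose_allOnes, ← transpose_mul, hJA, transpose_smul, transpose_allOnes]

lemma allOnes_mul_transpose_s2 [Fintype α] {A : Matrix α α ℤ} {k : ℤ}
    (hAJ : A * allOnes α = k • allOnes α) :
    allOnes α * Aᵀ = k • allOnes α := by
  rw [← transpose_allOnes, ← transpose_mul, hAJ, transpose_smul, transpose_allOnes]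

variable [DecidableEq α]

lemma add_one_apply_eq_zero_or_one {X : Matrix α α ℤ} (h01 : ∀ i j, X i j = 0 ∨ X i j = 1)
    (hdiag : ∀ i, X i i = 0) (i j : α) : (X + 1) i j = 0 ∨ (X + 1) i j = 1 := by
  by_cases hij : i = j
  · subst hij
    simp [hdiag]
  · simpa [one_apply_ne hij] using h01 i j

lemma MBlock_apply_eq_zero_or_one {X : Matrix α α ℤ} (h01 : ∀ i j, X i j = 0 ∨ X i j = 1)
    (hdiag : ∀ i, X i i = 0) (i j : α ⊕ α) : MBlock X i j = 0 ∨ MBlock X i j = 1 := by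
  rcases i with i | i <;> rcases j with j | j
  · exact h01 i j
  · exact add_one_apply_eq_zero_or_one (fun i j ↦ h01 j i) hdiag i j
  · exact add_one_apply_eq_zero_or_one h01 hdiag i j
  · exact h01 j i

lemma MBlock_apply_self {X : Matrix α α ℤ} (hdiag : ∀ i, X i i = 0) (i : α ⊕ α) :
    MBlock X i i = 0 := by
  rcases i with i | i <;> exact hdiag i

variable [Fintype α] {A : Matrix α α ℤ} {k : ℤ}

lemma MBlock_mul_self (hsum : A + Aᵀ = allOnes α - 1)
    (hAJ : A * allOnes α = k • allOnes α) (hJA : allOnes α * A = k • allOnes α) :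
    MBlock A * MBlock A = (k + 1) • allOnes (α ⊕ α) - MBlock A := by
  have hJN := allOnes_mul_transpose_s2 hAJ
  have e11 : A * A + (Aᵀ + 1) * (A + 1) = (A + Aᵀ) * A + (A + Aᵀ) + 1 := by noncomm_ring
  have e12 : A * (Aᵀ + 1) + (Aᵀ + 1) * Aᵀ = (A + Aᵀ) * Aᵀ + (A + Aᵀ) := by noncomm_ring
  have e21 : (A + 1) * A + Aᵀ * (A + 1) = (A + Aᵀ) * A + (A + Aᵀ) := by noncomm_ring
  have e22 : (A + 1) * (Aᵀ + 1) + Aᵀ * Aᵀ = (A + Aᵀ) * Aᵀ + (A + Aᵀ) + 1 := by noncomm_ring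
  rw [MBlock, allOnes_sum_eq_fromBlocks, fromBlocks_multiply, fromBlocks_smul,
    sub_eq_add_neg, fromBlocks_neg, fromBlocks_add, e11, e12, e21, e22, hsum,
    sub_mul, sub_mul, one_mul, one_mul, hJA, hJN]
  congr 1 <;> module

lemma MBlock_mul_allOnes (hAJ : A * allOnes α = k • allOnes α)
    (hJA : allOnes α * A = k • allOnes α) :
    MBlock A * allOnes (α ⊕ α) = (2 * k + 1) • allOnes (α ⊕ α) := by
  rw [MBlock, allOnes_sum_eq_fromBlocks, fromBlocks_multiply, fromBlocks_smul, add_mul, add_mul,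
    one_mul, hAJ, transpose_mul_allOnes_s2 hJA]
  congr 1 <;> module

lemma allOnes_mul_MBlock (hAJ : A * allOnes α = k • allOnes α)
    (hJA : allOnes α * A = k • allOnes α) :
    allOnes (α ⊕ α) * MBlock A = (2 * k + 1) • allOnes (α ⊕ α) := by
  rw [MBlock, allOnes_sum_eq_fromBlocks, fromBlocks_multiply, fromBlocks_smul, mul_add, mul_add,
    mul_one, hJA, allOnes_mul_transpose_s2 hAJ]
  congr 1 <;> module

end

theorem stmt2_general (k : ℕ)
    (A : Matrix (Fin (2 * k + 1)) (Fin (2 * k + 1)) ℤ)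
    (hA : IsRegularTournament k A) :
    IsAdjDSRG (MBlock A)
      (4 * (k : ℤ) + 2) (2 * (k : ℤ) + 1) ((k : ℤ) + 1) (k : ℤ) ((k : ℤ) + 1) := by
  obtain ⟨h01, hdiag, hsum, hAJ, hJA⟩ := hA
  refine ⟨?_, MBlock_apply_eq_zero_or_one h01 hdiag, MBlock_apply_self hdiag, ?_,
    MBlock_mul_allOnes hAJ hJA, allOnes_mul_MBlock hAJ hJA⟩
  · simp only [Fintype.card_sum, Fintype.card_fin]
    push_cast
    ring
  · rw [MBlock_mul_self hsum hAJ hJA]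
    module

/-- Lemma 3: `M(A) = [[A, Aᵀ + I], [A + I, Aᵀ]]` built from a regular
tournament of order `2k+1` is the adjacency matrix of a
DSRG `(4k+2, 2k+1, k+1, k, k+1)`. -/
theorem stmt2 (k : ℕ) (hk : 0 < k)
    (A : Matrix (Fin (2 * k + 1)) (Fin (2 * k + 1)) ℤ)
    (hA : IsRegularTournament k A) :
    IsAdjDSRG (MBlock A)
      (4 * (k : ℤ) + 2) (2 * (k : ℤ) + 1) ((k : ℤ) + 1) (k : ℤ) ((k : ℤ) + 1) :=
  stmt2_general k A hA
end

section
/- Let A be the adjacency matrix of a directed strongly regular graph DSRG(n, k, t, λ, μ). Then its complement A' = J − I − A is the adjacency matrix of a directed strongly regular graph DSRG(n, k', t', λ', μ') with k' = (n − 2k) + (k − 1), t' = (n − 2k) + (t − 1), λ' = (n − 2k) + (μ − 2), and μ' = (n − 2k) + λ; that is, A'·A' = t'·I + λ'·A' + μ'·(J − I − A') and A'·J = J·A' = k'·J. -/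
/-! Expanding `(J - I - A)²` with `J² = n • J`, `A J = J A = k • J` and the DSRG equation for `A²`
leaves a combination of `I`, `A` and `J`; read in the basis `I`, `A' = J - I - A`, `J - I - A'` its
coefficients are the new parameters. -/

open Matrix Kronecker

theorem allOnes_mul_allOnes (α : Type*) [Fintype α] :
    allOnes α * allOnes α = (Fintype.card α : ℤ) • allOnes α := by
  ext i j
  simp [allOnes, Matrix.mul_apply]

section Complement

variable {α : Type*} [DecidableEq α] {B : Matrix α α ℤ}

theorem allOnes_sub_one_sub_apply_self (i : α) : (allOnes α - 1 - B) i i = -B i i := by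
  simp [allOnes]

theorem allOnes_sub_one_sub_apply_of_ne {i j : α} (hij : i ≠ j) :
    (allOnes α - 1 - B) i j = 1 - B i j := by
  simp [allOnes, Matrix.one_apply_ne hij]

theorem allOnes_sub_one_sub_apply_eq_zero_or_one
    (h01 : ∀ i j, B i j = 0 ∨ B i j = 1) (hdiag : ∀ i, B i i = 0) (i j : α) :
    (allOnes α - 1 - B) i j = 0 ∨ (allOnes α - 1 - B) i j = 1 := by
  by_cases hij : i = j
  · subst hij
    simp only [allOnes_sub_one_sub_apply_self, hdiag, neg_zero, true_or]
  · rw [allOnes_sub_one_sub_apply_of_ne hij]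
    rcases h01 i j with h | h <;> simp [h]

theorem IsAdjDSRG.compl [Fintype α] {n k t l m : ℤ} (hB : IsAdjDSRG B n k t l m) :
    IsAdjDSRG (allOnes α - 1 - B) n ((n - 2 * k) + (k - 1)) ((n - 2 * k) + (t - 1))
      ((n - 2 * k) + (m - 2)) ((n - 2 * k) + l) := by
  obtain ⟨hcard, h01, hdiag, hBB, hBJ, hJB⟩ := hB
  have hJJ : allOnes α * allOnes α = n • allOnes α := by
    rw [allOnes_mul_allOnes, hcard]
  refine ⟨hcard, allOnes_sub_one_sub_apply_eq_zero_or_one h01 hdiag, fun i => ?_, ?_, ?_, ?_⟩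
  · rw [allOnes_sub_one_sub_apply_self, hdiag, neg_zero]
  · simp only [sub_mul, mul_sub, one_mul, mul_one, hJJ, hBJ, hJB, hBB]
    module
  · simp only [sub_mul, one_mul, hJJ, hBJ]
    module
  · simp only [mul_sub, mul_one, hJJ, hJB]
    module

end Complement

/-- The complement `J - I - A` of the adjacency matrix of a DSRG`(n,k,t,λ,μ)`
is the adjacency matrix of a DSRG with parameters
`(n, (n-2k)+(k-1), (n-2k)+(t-1), (n-2k)+(μ-2), (n-2k)+λ)`. -/
theorem stmt4 (n : ℕ) (k t l m : ℤ)
    (A : Matrix (Fin n) (Fin n) ℤ)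
    (hA : IsAdjDSRG A n k t l m) :
    IsAdjDSRG (allOnes (Fin n) - 1 - A) (n : ℤ)
      (((n : ℤ) - 2 * k) + (k - 1))
      (((n : ℤ) - 2 * k) + (t - 1))
      (((n : ℤ) - 2 * k) + (m - 2))
      (((n : ℤ) - 2 * k) + l) :=
  hA.compl
end

section
/- Let A be the adjacency matrix of a directed strongly regular graph DSRG(n, k, t, λ, μ) with t = μ, and let m > 1 be an integer. Then the Kronecker product J_m ⊗ A of the m×m all-ones matrix with A is the adjacency matrix of a directed strongly regular graph with parameters (nm, km, tm, λm, μm). -/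
/-! When `t = μ` the DSRG equation reads `A² = t J + (λ - t) A`. Since
`(J_m ⊗ X)(J_m ⊗ Y) = m (J_m ⊗ XY)` and `J_m ⊗ J_n = J_{mn}`, squaring `J_m ⊗ A`
gives `m t J_{mn} + m (λ - t) (J_m ⊗ A)`, which is the DSRG equation with parameters scaled by `m`;
the row and column sums scale the same way. -/

open Matrix Kronecker

theorem allOnes_kronecker_allOnes (α β : Type*) : allOnes β ⊗ₖ allOnes α = allOnes (β × α) := by
  ext ⟨i, a⟩ ⟨j, b⟩
  simp [allOnes]

theorem allOnes_kronecker_apply {α β : Type*} (A : Matrix α α ℤ) (i j : β) (a b : α) :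
    (allOnes β ⊗ₖ A) (i, a) (j, b) = A a b := by
  simp [allOnes]

theorem IsAdjDSRG.mul_self_eq {α : Type*} [Fintype α] [DecidableEq α] {B : Matrix α α ℤ}
    {n k t l : ℤ} (hB : IsAdjDSRG B n k t l t) : B * B = t • allOnes α + (l - t) • B := by
  rw [hB.2.2.2.1]
  module

theorem IsAdjDSRG.allOnes_kronecker {α β : Type*} [Fintype α] [DecidableEq α] [Fintype β]
    [DecidableEq β] {A : Matrix α α ℤ} {n k t l : ℤ} (hA : IsAdjDSRG A n k t l t) :
    IsAdjDSRG (allOnes β ⊗ₖ A) (n * Fintype.card β) (k * Fintype.card β)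
      (t * Fintype.card β) (l * Fintype.card β) (t * Fintype.card β) := by
  have hsq := hA.mul_self_eq
  obtain ⟨hcard, h01, hdiag, -, hrow, hcol⟩ := hA
  refine ⟨?_, ?_, ?_, ?_, ?_, ?_⟩
  · rw [Fintype.card_prod, Nat.cast_mul, hcard, mul_comm]
  · rintro ⟨-, a⟩ ⟨-, b⟩
    rw [allOnes_kronecker_apply]
    exact h01 a b
  · rintro ⟨-, a⟩
    rw [allOnes_kronecker_apply]
    exact hdiag a
  · rw [← mul_kronecker_mul, allOnes_mul_allOnes, hsq, smul_kronecker, kronecker_add,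
      kronecker_smul, kronecker_smul, allOnes_kronecker_allOnes]
    module
  · rw [← allOnes_kronecker_allOnes, ← mul_kronecker_mul, allOnes_mul_allOnes, hrow,
      smul_kronecker, kronecker_smul, allOnes_kronecker_allOnes, smul_smul, mul_comm]
  · rw [← allOnes_kronecker_allOnes, ← mul_kronecker_mul, allOnes_mul_allOnes, hcol,
      smul_kronecker, kronecker_smul, allOnes_kronecker_allOnes, smul_smul, mul_comm]

theorem stmt7_general (n : ℕ) (k t lam mu : ℤ) (m : ℕ)
    (A : Matrix (Fin n) (Fin n) ℤ)
    (hA : IsAdjDSRG A n k t lam mu) (htmu : t = mu) :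
    IsAdjDSRG (allOnes (Fin m) ⊗ₖ A)
      ((n : ℤ) * m) (k * m) (t * m) (lam * m) (mu * m) := by
  subst htmu
  simpa using hA.allOnes_kronecker (β := Fin m)

/-- Duval's Kronecker-product construction: if `A` is the adjacency matrix of a
DSRG`(n,k,t,λ,μ)` with `t = μ` and `m > 1`, then `J_m ⊗ A` is the adjacency
matrix of a DSRG`(nm, km, tm, λm, μm)`. -/
theorem stmt7 (n : ℕ) (k t lam mu : ℤ) (m : ℕ) (hm : 1 < m)
    (A : Matrix (Fin n) (Fin n) ℤ)
    (hA : IsAdjDSRG A n k t lam mu) (htmu : t = mu) :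
    IsAdjDSRG (allOnes (Fin m) ⊗ₖ A)
      ((n : ℤ) * m) (k * m) (t * m) (lam * m) (mu * m) :=
  stmt7_general n k t lam mu m A hA htmu
end

section
/- Let h = 2k+1 be odd and let A be the adjacency matrix of a regular tournament of order h with valency k. Let D be the (2h+2)×(2h+2) integer matrix given in block form (with blocks of sizes 1, h, 1, h) by D = [[0, 𝟏ᵀ, 0, 𝟎ᵀ], [𝟎, A, 𝟏, Aᵀ], [0, 𝟎ᵀ, 0, 𝟏ᵀ], [𝟏, Aᵀ, 𝟎, A]], where 𝟎 and 𝟏 denote the h-dimensional all-zeros and all-ones column vectors. Then D·Dᵀ = Dᵀ·D and D·D + D·Dᵀ + D + Dᵀ = h·J, where J is the (2h+2)×(2h+2) all-ones matrix. -/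
open Matrix Kronecker

/-!
Since the two off-diagonal blocks of `D` are transposes, `D = [[E, Eᵀ], [Eᵀ, E]]`, where `E` is
the tournament `A` extended by one vertex dominating all others. Such a block pattern is always
normal, and every block of `D·D + D·Dᵀ + D + Dᵀ` equals `S² + S` with `S = E + Eᵀ`. As `E` is
again a tournament, `S = J − I` on `h + 1` vertices, and `(J − I)² + (J − I) = J² − J = h·J`.
-/

section BlockPattern

variable {α R : Type*} [Fintype α] [NonUnitalNonAssocSemiring R]

theorem fromBlocks_transpose_mul_comm (E : Matrix α α R) :
    let D := fromBlocks E Eᵀ Eᵀ E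
    D * Dᵀ = Dᵀ * D := by
  simp only [fromBlocks_transpose, fromBlocks_multiply, transpose_transpose]
  congr 1 <;> abel

theorem fromBlocks_transpose_mul_add_eq (E : Matrix α α R) :
    let D := fromBlocks E Eᵀ Eᵀ E
    let S := E + Eᵀ
    D * D + D * Dᵀ + D + Dᵀ = fromBlocks (S * S + S) (S * S + S) (S * S + S) (S * S + S) := by
  simp only [fromBlocks_transpose, fromBlocks_multiply, fromBlocks_add, transpose_transpose,
    add_mul, mul_add]
  congr 1 <;> abel

end BlockPattern

theorem fromBlocks_allOnes (α : Type*) :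
    fromBlocks (allOnes α) (allOnes α) (allOnes α) (allOnes α) = allOnes (α ⊕ α) := by
  ext (i | i) (j | j) <;> rfl

theorem allOnes_sub_one_mul_self_add_self (α : Type*) [Fintype α] [DecidableEq α] :
    let S := allOnes α - 1
    S * S + S = ((Fintype.card α : ℤ) - 1) • allOnes α := by
  have hexpand : (allOnes α - 1) * (allOnes α - 1) + (allOnes α - 1)
      = allOnes α * allOnes α - allOnes α := by noncomm_ring
  simp only [hexpand, allOnes_mul_allOnes, sub_smul, one_smul]

theorem fromBlocks_add_transpose_eq_allOnes_sub_one {α : Type*} [DecidableEq α]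
    {A : Matrix α α ℤ} (hA : A + Aᵀ = allOnes α - 1) :
    let E : Matrix (Fin 1 ⊕ α) (Fin 1 ⊕ α) ℤ := fromBlocks 0 (of fun _ _ => 1) 0 A
    E + Eᵀ = allOnes (Fin 1 ⊕ α) - 1 := by
  ext (i | i) (j | j)
  · simp [allOnes, Subsingleton.elim i j]
  · simp [allOnes]
  · simp [allOnes]
  · simpa [allOnes, one_apply] using congrFun (congrFun hA i) j

/-- For a regular tournament `A` of odd order `h = 2k+1` and the
`(2h+2)×(2h+2)` matrix `D = [[0, 𝟏ᵀ, 0, 𝟎ᵀ], [𝟎, A, 𝟏, Aᵀ], [0, 𝟎ᵀ, 0, 𝟏ᵀ],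
[𝟏, Aᵀ, 𝟎, A]]`, one has `D·Dᵀ = Dᵀ·D` and `D·D + D·Dᵀ + D + Dᵀ = h·J`. -/
theorem stmt10 (k : ℕ)
    (A : Matrix (Fin (2 * k + 1)) (Fin (2 * k + 1)) ℤ)
    (hA : IsRegularTournament k A) :
    let h : ℕ := 2 * k + 1
    let E : Matrix (Fin 1 ⊕ Fin (2 * k + 1)) (Fin 1 ⊕ Fin (2 * k + 1)) ℤ :=
      Matrix.fromBlocks 0 (Matrix.of fun _ _ => 1) 0 A
    let F : Matrix (Fin 1 ⊕ Fin (2 * k + 1)) (Fin 1 ⊕ Fin (2 * k + 1)) ℤ :=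
      Matrix.fromBlocks 0 0 (Matrix.of fun _ _ => 1) Aᵀ
    let D := Matrix.fromBlocks E F F E
    D * Dᵀ = Dᵀ * D ∧
    D * D + D * Dᵀ + D + Dᵀ =
      (h : ℤ) • allOnes ((Fin 1 ⊕ Fin (2 * k + 1)) ⊕ (Fin 1 ⊕ Fin (2 * k + 1))) := by
  intro h E F D
  obtain ⟨-, -, hAsum, -, -⟩ := hA
  have hF : F = Eᵀ := by
    simp only [F, E, fromBlocks_transpose, transpose_zero]
    rfl
  have hS : E + Eᵀ = allOnes _ - 1 :=
    fromBlocks_add_transpose_eq_allOnes_sub_one hAsum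
  have hcard : (Fintype.card (Fin 1 ⊕ Fin (2 * k + 1)) : ℤ) - 1 = h := by
    simp [h, add_comm]
  refine ⟨by simpa only [D, hF] using fromBlocks_transpose_mul_comm E, ?_⟩
  rw [show D = fromBlocks E Eᵀ Eᵀ E by rw [← hF], fromBlocks_transpose_mul_add_eq, hS,
    allOnes_sub_one_mul_self_add_self, hcard, ← fromBlocks_allOnes, fromBlocks_smul]
end

section
/- Let s be a positive integer, let Π be the (2s+2)×(2s+2) permutation matrix of the (2s+2)-cycle, i.e., Π i j = 1 if j ≡ i + 1 (mod 2s+2) and Π i j = 0 otherwise, and let L = Π + Π² + ⋯ + Πˢ. Then L·L + L·Lᵀ + L + Lᵀ = s·J, where J is the (2s+2)×(2s+2) all-ones matrix; moreover L·Lᵀ = Lᵀ·L and L·J = J·L = s·J. -/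
open Matrix Kronecker

section AuxCyc
open Finset

private def cycP (n : ℕ) : Matrix (Fin n) (Fin n) ℤ :=
  Matrix.of fun i j => if (j : ℕ) = ((i : ℕ) + 1) % n then 1 else 0

private lemma mod_of_lt_two (n a : ℕ) (hn : 0 < n) (ha : a < 2*n) :
    a % n = if a < n then a else a - n := by
  split
  · exact Nat.mod_eq_of_lt ‹_›
  · rw [Nat.mod_eq_sub_mod (by omega), Nat.mod_eq_of_lt (by omega)]

private lemma cycP_pow (n : ℕ) (hn : 0 < n) (k : ℕ) (i j : Fin n) :
    (cycP n ^ k) i j = if (j : ℕ) = ((i : ℕ) + k) % n then 1 else 0 := by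
  induction k generalizing i with
  | zero =>
    simp only [pow_zero, Matrix.one_apply, Fin.ext_iff, add_zero,
      Nat.mod_eq_of_lt i.isLt]
    exact if_congr eq_comm rfl rfl
  | succ k ih =>
    rw [pow_succ', Matrix.mul_apply]
    have hlt : ((i : ℕ) + 1) % n < n := Nat.mod_lt _ hn
    rw [Finset.sum_eq_single (⟨((i:ℕ)+1) % n, hlt⟩ : Fin n)]
    · rw [ih]
      simp only [cycP, Matrix.of_apply, if_pos rfl, one_mul]
      have : (((i:ℕ)+1) % n + k) % n = ((i:ℕ) + (k+1)) % n := by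
        rw [Nat.mod_add_mod]; congr 1; omega
      rw [this]; simp
    · intro b _ hb
      simp only [cycP, Matrix.of_apply]
      rw [if_neg, zero_mul]
      intro h
      exact hb (Fin.ext h)
    · intro h
      exact absurd (Finset.mem_univ _) h

private lemma cycP_pow_transpose (n : ℕ) (hn : 0 < n) (k : ℕ) (hk : k ≤ n) :
    (cycP n ^ k)ᵀ = cycP n ^ (n - k) := by
  ext i j
  rw [Matrix.transpose_apply, cycP_pow n hn, cycP_pow n hn]
  have h1 := mod_of_lt_two n ((j:ℕ) + k) hn (by omega)
  have h2 := mod_of_lt_two n ((i:ℕ) + (n - k)) hn (by omega)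
  have hi := i.isLt; have hj := j.isLt
  rw [h1, h2]
  split <;> split <;> split <;> split <;> first | rfl | omega

private lemma cycP_pow_mul_allOnes (n : ℕ) (hn : 0 < n) (k : ℕ) (hk : k ≤ n)
    (J : Matrix (Fin n) (Fin n) ℤ) (hJ : ∀ i j, J i j = 1) :
    cycP n ^ k * J = J ∧ J * (cycP n ^ k) = J := by
  constructor <;> ext i j <;> rw [Matrix.mul_apply]
  · rw [Finset.sum_eq_single (⟨((i:ℕ) + k) % n, Nat.mod_lt _ hn⟩ : Fin n)]
    · rw [cycP_pow n hn, if_pos rfl, hJ, one_mul, hJ]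
    · intro b _ hb
      rw [cycP_pow n hn, if_neg (fun h => hb (Fin.ext h)), zero_mul]
    · exact fun h => absurd (Finset.mem_univ _) h
  · have hj := j.isLt
    obtain ⟨m₀, hm0n, hm0⟩ : ∃ m₀, m₀ < n ∧ (m₀ + k = j ∨ m₀ + k = (j:ℕ) + n) :=
      ⟨if k ≤ (j:ℕ) then (j:ℕ) - k else (j:ℕ) + n - k, by split <;> omega, by split <;> omega⟩
    rw [Finset.sum_eq_single (⟨m₀, hm0n⟩ : Fin n)]
    · rw [cycP_pow n hn, hJ, one_mul, hJ, if_pos]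
      rw [mod_of_lt_two n _ hn (by omega)]
      simp only [Fin.val_mk]
      split <;> omega
    · intro b _ hb
      rw [cycP_pow n hn, hJ, one_mul, if_neg]
      have hb' : (b:ℕ) ≠ m₀ := fun h => hb (Fin.ext h)
      have := b.isLt
      rw [mod_of_lt_two n _ hn (by omega)]
      split <;> omega
    · exact fun h => absurd (Finset.mem_univ _) h

private lemma allOnes_eq_sum (n : ℕ) (hn : 0 < n) (J : Matrix (Fin n) (Fin n) ℤ)
    (hJ : ∀ i j, J i j = 1) :
    J = ∑ k ∈ range n, cycP n ^ k := by
  ext i j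
  rw [Matrix.sum_apply, hJ]
  have hi := i.isLt; have hj := j.isLt
  obtain ⟨k₀, hk0n, hk0⟩ : ∃ k₀, k₀ < n ∧ ((i:ℕ) + k₀ = j ∨ (i:ℕ) + k₀ = (j:ℕ) + n) :=
    ⟨if (i:ℕ) ≤ j then (j:ℕ) - i else (j:ℕ) + n - i, by split <;> omega, by split <;> omega⟩
  rw [Finset.sum_eq_single k₀]
  · rw [cycP_pow n hn, if_pos]
    rw [mod_of_lt_two n _ hn (by omega)]
    split <;> omega
  · intro b hb hbne
    rw [Finset.mem_range] at hb
    rw [cycP_pow n hn, if_neg]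
    rw [mod_of_lt_two n _ hn (by omega)]
    split <;> omega
  · intro h
    rw [cycP_pow n hn, if_neg]
    rw [Finset.mem_range] at h
    rw [mod_of_lt_two n _ hn (by omega)]
    split <;> omega

end AuxCyc

open Finset in
/-- With `Π` the permutation matrix of the `(2s+2)`-cycle and
`L = Π + Π² + ⋯ + Πˢ`, one has `L·L + L·Lᵀ + L + Lᵀ = s·J`,
`L·Lᵀ = Lᵀ·L`, and `L·J = J·L = s·J`. -/
theorem stmt12 (s : ℕ) (hs : 0 < s) :
    let P : Matrix (Fin (2 * s + 2)) (Fin (2 * s + 2)) ℤ :=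
      Matrix.of fun i j => if (j : ℕ) = ((i : ℕ) + 1) % (2 * s + 2) then 1 else 0
    let L := ∑ i ∈ Finset.Icc 1 s, P ^ i
    L * L + L * Lᵀ + L + Lᵀ = (s : ℤ) • allOnes (Fin (2 * s + 2)) ∧
    L * Lᵀ = Lᵀ * L ∧
    L * allOnes (Fin (2 * s + 2)) = (s : ℤ) • allOnes (Fin (2 * s + 2)) ∧
    allOnes (Fin (2 * s + 2)) * L = (s : ℤ) • allOnes (Fin (2 * s + 2)) := by
  intro P L
  have hn : 0 < 2 * s + 2 := by omega
  set Q : Matrix (Fin (2*s+2)) (Fin (2*s+2)) ℤ := cycP (2*s+2) with hQ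
  set J : Matrix (Fin (2*s+2)) (Fin (2*s+2)) ℤ := allOnes (Fin (2*s+2)) with hJ
  have hJ1 : ∀ i j, J i j = 1 := fun _ _ => rfl
  have hL : L = ∑ k ∈ Icc 1 s, Q ^ k := rfl
  have hLT : Lᵀ = ∑ k ∈ Icc 1 s, Q ^ (2*s+2 - k) := by
    rw [hL, Matrix.transpose_sum]
    refine Finset.sum_congr rfl fun k hk => ?_
    rw [mem_Icc] at hk
    exact cycP_pow_transpose _ hn k (by omega)
  have hLPs : L * Q ^ (s+1) = Lᵀ := by
    rw [hLT, hL, Finset.sum_mul]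
    refine Finset.sum_nbij' (fun k => s + 1 - k) (fun k => s + 1 - k) ?_ ?_ ?_ ?_ ?_
      <;> intro k hk <;> simp only [mem_Icc] at hk ⊢ <;> beta_reduce <;> try omega
    rw [← pow_add]
    congr 1
    omega
  have hJsum : J = ∑ k ∈ range (2*s+2), Q ^ k := allOnes_eq_sum _ hn _ hJ1
  have hsum : L + Lᵀ = J - 1 - Q ^ (s+1) := by
    have e1 : ∑ k ∈ Ico 0 1, Q^k + ∑ k ∈ Ico 1 (2*s+2), Q^k = ∑ k ∈ Ico 0 (2*s+2), Q^k :=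
      Finset.sum_Ico_consecutive _ (by omega) (by omega)
    have e2 : ∑ k ∈ Ico 1 (s+1), Q^k + ∑ k ∈ Ico (s+1) (2*s+2), Q^k = ∑ k ∈ Ico 1 (2*s+2), Q^k :=
      Finset.sum_Ico_consecutive _ (by omega) (by omega)
    have e3 : ∑ k ∈ Ico (s+1) (s+2), Q^k + ∑ k ∈ Ico (s+2) (2*s+2), Q^k
        = ∑ k ∈ Ico (s+1) (2*s+2), Q^k :=
      Finset.sum_Ico_consecutive _ (by omega) (by omega)
    have h0 : ∑ k ∈ Ico 0 1, Q^k = 1 := by simp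
    have h1 : ∑ k ∈ Ico 1 (s+1), Q^k = L := by rw [Finset.Ico_add_one_right_eq_Icc, hL]
    have h2 : ∑ k ∈ Ico (s+1) (s+2), Q^k = Q^(s+1) := by simp
    have h3 : ∑ k ∈ Ico (s+2) (2*s+2), Q^k = Lᵀ := by
      rw [hLT]
      refine (Finset.sum_nbij' (fun k => 2*s+2 - k) (fun k => 2*s+2 - k) ?_ ?_ ?_ ?_ ?_).symm
        <;> intro k hk <;> simp only [mem_Icc, mem_Ico] at * <;> beta_reduce <;> try omega
    have : J = 1 + L + (Q^(s+1) + Lᵀ) := by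
      rw [hJsum, range_eq_Ico, ← e1, ← e2, ← e3, h0, h1, h2, h3]
      abel
    rw [this]; abel
  have hLJ : L * J = (s : ℤ) • J := by
    rw [hL, Finset.sum_mul,
      Finset.sum_congr rfl fun k hk =>
        (cycP_pow_mul_allOnes _ hn k (by rw [mem_Icc] at hk; omega) J hJ1).1,
      Finset.sum_const, Nat.card_Icc, natCast_zsmul, Nat.add_sub_cancel]
  have hJL : J * L = (s : ℤ) • J := by
    rw [hL, Finset.mul_sum,
      Finset.sum_congr rfl fun k hk =>
        (cycP_pow_mul_allOnes _ hn k (by rw [mem_Icc] at hk; omega) J hJ1).2,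
      Finset.sum_const, Nat.card_Icc, natCast_zsmul, Nat.add_sub_cancel]
  have hcomm : L * Lᵀ = Lᵀ * L := by
    rw [hLT, hL]
    exact Commute.sum_left _ _ _ fun k _ =>
      Commute.sum_right _ _ _ fun m _ => (Commute.refl Q).pow_pow _ _
  refine ⟨?_, hcomm, hLJ, hJL⟩
  have h1 : L*L + L*Lᵀ + L + Lᵀ = L*(L+Lᵀ) + (L+Lᵀ) := by rw [mul_add]; abel
  rw [h1, hsum, mul_sub, mul_sub, mul_one, hLJ, hLPs, ← hsum]
  abel
end

section
/- Let A and B be n×n integer matrices and let P be an n×n permutation matrix (the permutation matrix of some permutation σ of Fin n) with P·A·Pᵀ = B. Then the block permutation matrix Q = [[P, 0], [0, P]] (Matrix.fromBlocks P 0 0 P) satisfies Q·M(A)·Qᵀ = M(B); in particular, isomorphic tournaments yield isomorphic graphs under the construction M(·). -/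
open Matrix Kronecker

/-! Conjugation by `diag(P, P)` acts blockwise, and for an orthogonal `P` (such as a permutation
matrix) conjugation by `P` commutes with transposition and fixes `I`; hence it maps every block
of `M(A)` to the corresponding block of `M(P A Pᵀ)`. -/

namespace Matrix

variable {l m n o R : Type*}

theorem fromBlocks_diag_mul_mul_transpose [Fintype l] [Fintype m] [NonUnitalNonAssocSemiring R]
    (P : Matrix n l R) (Q : Matrix o m R) (A : Matrix l l R) (B : Matrix l m R)
    (C : Matrix m l R) (D : Matrix m m R) :
    fromBlocks P 0 0 Q * fromBlocks A B C D * (fromBlocks P 0 0 Q)ᵀ =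
      fromBlocks (P * A * Pᵀ) (P * B * Qᵀ) (Q * C * Pᵀ) (Q * D * Qᵀ) := by
  simp only [fromBlocks_transpose, transpose_zero, fromBlocks_multiply, Matrix.mul_zero,
    Matrix.zero_mul, add_zero, zero_add]

theorem transpose_mul_mul_transpose [Fintype m] [CommSemiring R] (P : Matrix n m R)
    (A : Matrix m m R) : (P * A * Pᵀ)ᵀ = P * Aᵀ * Pᵀ := by
  rw [transpose_mul, transpose_mul, transpose_transpose, Matrix.mul_assoc]

theorem mul_add_one_mul_transpose [Fintype m] [DecidableEq m] [DecidableEq n] [Semiring R]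
    {P : Matrix n m R} (hP : P * Pᵀ = 1) (A : Matrix m m R) :
    P * (A + 1) * Pᵀ = P * A * Pᵀ + 1 := by
  rw [Matrix.mul_add, Matrix.add_mul, Matrix.mul_one, hP]

theorem permMatrix_mul_transpose_self [Fintype n] [DecidableEq n] [NonAssocSemiring R]
    (σ : Equiv.Perm n) : σ.permMatrix R * (σ.permMatrix R)ᵀ = 1 := by
  rw [transpose_permMatrix, ← permMatrix_mul, inv_mul_cancel, permMatrix_one]

end Matrix

theorem fromBlocks_diag_mul_MBlock_mul_transpose {α : Type*} [Fintype α] [DecidableEq α]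
    {P : Matrix α α ℤ} (hP : P * Pᵀ = 1) (A : Matrix α α ℤ) :
    Matrix.fromBlocks P 0 0 P * MBlock A * (Matrix.fromBlocks P 0 0 P)ᵀ =
      MBlock (P * A * Pᵀ) := by
  rw [MBlock, MBlock, fromBlocks_diag_mul_mul_transpose, mul_add_one_mul_transpose hP,
    mul_add_one_mul_transpose hP, transpose_mul_mul_transpose]

/-- Isomorphic tournaments yield isomorphic graphs under the construction
`M(·)`: if `P·A·Pᵀ = B` for a permutation matrix `P`, then
`Q = [[P, 0], [0, P]]` satisfies `Q·M(A)·Qᵀ = M(B)`. -/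
theorem stmt15 (n : ℕ) (A B : Matrix (Fin n) (Fin n) ℤ) (σ : Equiv.Perm (Fin n))
    (h : σ.permMatrix ℤ * A * (σ.permMatrix ℤ)ᵀ = B) :
    Matrix.fromBlocks (σ.permMatrix ℤ) 0 0 (σ.permMatrix ℤ) *
        MBlock A *
        (Matrix.fromBlocks (σ.permMatrix ℤ) 0 0 (σ.permMatrix ℤ))ᵀ =
      MBlock B := by
  rw [← h]
  exact fromBlocks_diag_mul_MBlock_mul_transpose (permMatrix_mul_transpose_self σ) A
end

section
/- Let A be an n×n integer matrix and let P be an n×n permutation matrix such that P·A = Aᵀ and A·P = Aᵀ. Then the block permutation matrix Q = [[I, 0], [0, P]] (Matrix.fromBlocks I 0 0 P) satisfies Q·(Matrix.fromBlocks A Aᵀ A Aᵀ)·Qᵀ = Matrix.fromBlocks A A Aᵀ Aᵀ; in particular, the two directed strongly regular graphs B = [[A, Aᵀ], [A, Aᵀ]] and C = [[A, A], [Aᵀ, Aᵀ]] constructed from A are isomorphic. -/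
open Matrix Kronecker

theorem Matrix.fromBlocks_diagonal_mul_mul_transpose {m n R : Type*} [Fintype m] [Fintype n]
    [Semiring R] (P₁ : Matrix m m R) (P₂ : Matrix n n R) (W : Matrix m m R) (X : Matrix m n R)
    (Y : Matrix n m R) (Z : Matrix n n R) :
    fromBlocks P₁ 0 0 P₂ * fromBlocks W X Y Z * (fromBlocks P₁ 0 0 P₂)ᵀ =
      fromBlocks (P₁ * W * P₁ᵀ) (P₁ * X * P₂ᵀ) (P₂ * Y * P₁ᵀ) (P₂ * Z * P₂ᵀ) := by
  simp [fromBlocks_transpose, fromBlocks_multiply]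

theorem stmt16_general (n : ℕ) (A : Matrix (Fin n) (Fin n) ℤ) (σ : Equiv.Perm (Fin n))
    (h1 : σ.permMatrix ℤ * A = Aᵀ) :
    Matrix.fromBlocks (1 : Matrix (Fin n) (Fin n) ℤ) 0 0 (σ.permMatrix ℤ) *
        Matrix.fromBlocks A Aᵀ A Aᵀ *
        (Matrix.fromBlocks (1 : Matrix (Fin n) (Fin n) ℤ) 0 0 (σ.permMatrix ℤ))ᵀ =
      Matrix.fromBlocks A A Aᵀ Aᵀ := by
  have h1_transpose : Aᵀ * (σ.permMatrix ℤ)ᵀ = A := by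
    rw [← transpose_mul, h1, transpose_transpose]
  rw [fromBlocks_diagonal_mul_mul_transpose]
  simp only [transpose_one, Matrix.one_mul, Matrix.mul_one, Matrix.mul_assoc, h1_transpose, h1]

/-- Lemma 8: if a permutation matrix `P` satisfies `P·A = Aᵀ = A·P`, then
`Q = [[I, 0], [0, P]]` satisfies
`Q·[[A, Aᵀ], [A, Aᵀ]]·Qᵀ = [[A, A], [Aᵀ, Aᵀ]]`, so the two DSRGs of Lemma 2
constructed from `A` are isomorphic. -/
theorem stmt16 (n : ℕ) (A : Matrix (Fin n) (Fin n) ℤ) (σ : Equiv.Perm (Fin n))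
    (h1 : σ.permMatrix ℤ * A = Aᵀ) (h2 : A * σ.permMatrix ℤ = Aᵀ) :
    Matrix.fromBlocks (1 : Matrix (Fin n) (Fin n) ℤ) 0 0 (σ.permMatrix ℤ) *
        Matrix.fromBlocks A Aᵀ A Aᵀ *
        (Matrix.fromBlocks (1 : Matrix (Fin n) (Fin n) ℤ) 0 0 (σ.permMatrix ℤ))ᵀ =
      Matrix.fromBlocks A A Aᵀ Aᵀ :=
  stmt16_general n A σ h1
end

section
/- Let A be an n×n integer matrix, let P be an n×n permutation matrix such that P·A = Aᵀ and A·P = Aᵀ, and let w be a positive integer. Let B = J_w ⊗ (Matrix.fromBlocks A Aᵀ A Aᵀ) and C = J_w ⊗ (Matrix.fromBlocks A A Aᵀ Aᵀ), where J_w is the w×w all-ones matrix and ⊗ the Kronecker product. Then the block permutation matrix H = I_w ⊗ (Matrix.fromBlocks I 0 0 P) satisfies H·B·Hᵀ = C; in particular, B and C are isomorphic. -/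
open Matrix Kronecker

section

variable {R ι α β : Type*} [CommSemiring R]

theorem one_kronecker_mul_kronecker_mul_transpose [Fintype ι] [DecidableEq ι] [Fintype α]
    [Fintype β] (M : Matrix ι ι R) (X : Matrix α α R) (Y : Matrix β α R) :
    ((1 : Matrix ι ι R) ⊗ₖ Y) * (M ⊗ₖ X) * ((1 : Matrix ι ι R) ⊗ₖ Y)ᵀ = M ⊗ₖ (Y * X * Yᵀ) := by
  rw [← kroneckerMap_transpose, ← mul_kronecker_mul, ← mul_kronecker_mul, transpose_one,
    Matrix.one_mul, Matrix.mul_one]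

theorem fromBlocks_one_diag_conj_of_mul_eq_transpose [Fintype α] [DecidableEq α]
    {A P : Matrix α α R} (hPA : P * A = Aᵀ) :
    fromBlocks 1 0 0 P * fromBlocks A Aᵀ A Aᵀ * (fromBlocks 1 0 0 P)ᵀ =
      fromBlocks A A Aᵀ Aᵀ := by
  have hAPt : Aᵀ * Pᵀ = A := by rw [← transpose_mul, hPA, transpose_transpose]
  simp [fromBlocks_transpose, fromBlocks_multiply, hPA, hAPt, Matrix.mul_assoc]

end

theorem stmt17_general (n w : ℕ)
    (A : Matrix (Fin n) (Fin n) ℤ) (σ : Equiv.Perm (Fin n))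
    (h1 : σ.permMatrix ℤ * A = Aᵀ) :
    let H := (1 : Matrix (Fin w) (Fin w) ℤ) ⊗ₖ
      Matrix.fromBlocks (1 : Matrix (Fin n) (Fin n) ℤ) 0 0 (σ.permMatrix ℤ)
    let B := allOnes (Fin w) ⊗ₖ Matrix.fromBlocks A Aᵀ A Aᵀ
    let C := allOnes (Fin w) ⊗ₖ Matrix.fromBlocks A A Aᵀ Aᵀ
    H * B * Hᵀ = C := by
  intro H B C
  show H * B * Hᵀ = C
  rw [one_kronecker_mul_kronecker_mul_transpose, fromBlocks_one_diag_conj_of_mul_eq_transpose h1]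

/-- Lemma 9: if a permutation matrix `P` satisfies `P·A = Aᵀ = A·P`, then with
`B = J_w ⊗ [[A, Aᵀ], [A, Aᵀ]]`, `C = J_w ⊗ [[A, A], [Aᵀ, Aᵀ]]` and
`H = I_w ⊗ [[I, 0], [0, P]]`, one has `H·B·Hᵀ = C`, so `B` and `C` are
isomorphic. -/
theorem stmt17 (n w : ℕ) (hw : 0 < w)
    (A : Matrix (Fin n) (Fin n) ℤ) (σ : Equiv.Perm (Fin n))
    (h1 : σ.permMatrix ℤ * A = Aᵀ) (h2 : A * σ.permMatrix ℤ = Aᵀ) :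
    let H := (1 : Matrix (Fin w) (Fin w) ℤ) ⊗ₖ
      Matrix.fromBlocks (1 : Matrix (Fin n) (Fin n) ℤ) 0 0 (σ.permMatrix ℤ)
    let B := allOnes (Fin w) ⊗ₖ Matrix.fromBlocks A Aᵀ A Aᵀ
    let C := allOnes (Fin w) ⊗ₖ Matrix.fromBlocks A A Aᵀ Aᵀ
    H * B * Hᵀ = C :=
  stmt17_general n w A σ h1
end
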